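/- Let R = ((ℓ_1,…,ℓ_d),(u_1,…,u_{d+1})) be a constructible special point data of level d with q nodes, let ℓ ∈ {1,…,q}, and let (v_1,…,v_{d+1}) be the reordering of (u_1,…,u_{d+1}) that is increasing for the relation <_ℓ relative to the node labels of R. Then a^ℓ_{v_1}(R) − a^ℓ_{v_{d+1}}(R) ≤ 1; furthermore, equality holds if and only if there exists i ∈ {1,…,d} such that ℓ_i = ℓ. -/

import Mathlib

/-!
The first and last tuples of the `<_ℓ`-sorted family are its least and greatest elements, so
it suffices to show `a^ℓ(least) = a^ℓ(greatest) + 1` when `ℓ` occurs among the labels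
(otherwise every `a^ℓ` vanishes). Induct on the construction. If the new label is `ℓ`, every
tuple ending in `2` precedes every tuple ending in `1`, so the least and greatest new tuples are
`v_h·2` and `v_h·1`, which differ only in the new `ℓ`-coordinate. If the new label is not `ℓ`,
dropping the last coordinate sends the new least and greatest tuples to old ones and does not
change `a^ℓ`.
-/

/-- The relation `u <_ℓ u'` on `{1,2}^d`, relative to node labels `lab : Fin d → ℕ`. -/
def ltNode {d : ℕ} (lab : Fin d → ℕ) (ℓ : ℕ) (u u' : Fin d → ℕ) : Prop :=
  (∃ k₀ : Fin d, lab k₀ = ℓ ∧ u k₀ = 2 ∧ u' k₀ = 1 ∧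
      ∀ k : Fin d, k₀ < k → lab k = ℓ → u k = u' k) ∨
  ((∀ k : Fin d, lab k = ℓ → u k = u' k) ∧
    ∃ k₀ : Fin d, lab k₀ ≠ ℓ ∧ u k₀ = 1 ∧ u' k₀ = 2 ∧
      ∀ k : Fin d, k < k₀ → u k = u' k)

/-- Constructible special point data of level `d` with `q` nodes. -/
inductive Constructible (q : ℕ) :
    (d : ℕ) → (Fin d → ℕ) → (Fin (d + 1) → Fin d → ℕ) → Prop
  | base (ℓ : ℕ) (h1 : 1 ≤ ℓ) (hq : ℓ ≤ q) :
      Constructible q 1 (fun _ => ℓ) ![![1], ![2]]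
  | step {d : ℕ} {lab : Fin d → ℕ} {u : Fin (d + 1) → Fin d → ℕ}
      (hR : Constructible q d lab u) (ℓ : ℕ) (h1 : 1 ≤ ℓ) (hq : ℓ ≤ q)
      (v : Fin (d + 1) → Fin d → ℕ) (σ : Equiv.Perm (Fin (d + 1)))
      (hv : ∀ j, v j = u (σ j))
      (hsort : ∀ i j : Fin (d + 1), i < j → ltNode lab ℓ (v i) (v j))
      (h : ℕ) (hh1 : 1 ≤ h) (hh2 : h ≤ d + 1) :
      Constructible q (d + 1) (Fin.snoc lab ℓ)
        (fun j : Fin (d + 2) =>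
          if hj : (j : ℕ) < h then Fin.snoc (v ⟨(j : ℕ), by omega⟩) 1
          else Fin.snoc (v ⟨(j : ℕ) - 1, by omega⟩) 2)

/-- `a^ℓ_u(R)`: the number of `k` with `ℓ_k = ℓ` and `u(k) = 2`. -/
def aCount {d : ℕ} (lab : Fin d → ℕ) (ℓ : ℕ) (u : Fin d → ℕ) : ℕ :=
  (Finset.univ.filter (fun k : Fin d => lab k = ℓ ∧ u k = 2)).card

/-- `|a_u(R)|`: the number of `k` with `u(k) = 2`. -/
def aTot {d : ℕ} (u : Fin d → ℕ) : ℕ :=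
  (Finset.univ.filter (fun k : Fin d => u k = 2)).card

/-- Lexicographic order on tuples, comparing at the smallest coordinate where they differ. -/
def lexLt {d : ℕ} (u u' : Fin d → ℕ) : Prop :=
  ∃ k₀ : Fin d, (∀ k : Fin d, k < k₀ → u k = u' k) ∧ u k₀ < u' k₀

def IsLeastBy {α : Type*} (r : α → α → Prop) (s : Set α) (a : α) : Prop :=
  a ∈ s ∧ ∀ b ∈ s, b ≠ a → r a b

namespace IsLeastBy

variable {α β : Type*} {r : α → α → Prop} {s : Set α} {a b : α}

theorem unique (hr : ∀ a b, r a b → ¬ r b a) (ha : IsLeastBy r s a) (hb : IsLeastBy r s b) :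
    a = b := by
  by_contra hab
  exact hr a b (ha.2 b hb.1 (Ne.symm hab)) (hb.2 a ha.1 hab)

theorem image {r₀ : β → β → Prop} {f : α → β} (hf : ∀ a b, r a b → f a ≠ f b → r₀ (f a) (f b))
    (ha : IsLeastBy r s a) : IsLeastBy r₀ (f '' s) (f a) := by
  refine ⟨Set.mem_image_of_mem f ha.1, ?_⟩
  rintro _ ⟨b, hb, rfl⟩ hne
  exact hf a b (ha.2 b hb fun h => hne (h ▸ rfl)) hne.symm

end IsLeastBy

section Sorted

variable {α : Type*} {r : α → α → Prop} {n : ℕ} {v : Fin (n + 1) → α}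

theorem isLeastBy_range_zero (hv : ∀ i j, i < j → r (v i) (v j)) :
    IsLeastBy r (Set.range v) (v 0) := by
  refine ⟨⟨0, rfl⟩, ?_⟩
  rintro _ ⟨j, rfl⟩ hj
  exact hv 0 j (Fin.pos_of_ne_zero fun h => hj (h ▸ rfl))

theorem isLeastBy_flip_range_last (hv : ∀ i j, i < j → r (v i) (v j)) :
    IsLeastBy (flip r) (Set.range v) (v (Fin.last n)) := by
  refine ⟨⟨Fin.last n, rfl⟩, ?_⟩
  rintro _ ⟨j, rfl⟩ hj
  exact hv j _ (Fin.lt_last_iff_ne_last.mpr fun h => hj (h ▸ rfl))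

end Sorted

theorem range_eq_of_perm {α : Type*} {n : ℕ} {u v : Fin n → α} {σ : Equiv.Perm (Fin n)}
    (hv : ∀ j, v j = u (σ j)) : Set.range v = Set.range u := by
  rw [show v = u ∘ σ from funext hv, σ.surjective.range_comp]

section LtNode

variable {d : ℕ} {lab : Fin d → ℕ} {ℓ : ℕ}

theorem ltNode_asymm {a b : Fin d → ℕ} (hab : ltNode lab ℓ a b) : ¬ ltNode lab ℓ b a := by
  rcases hab with ⟨k₀, hl₀, ha₀, hb₀, hc₀⟩ | ⟨hag, k₀, hl₀, ha₀, hb₀, hc₀⟩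
  · rintro (⟨k₁, hl₁, ha₁, hb₁, hc₁⟩ | ⟨hag, _⟩)
    · rcases lt_trichotomy k₀ k₁ with hlt | rfl | hlt
      · have := hc₀ k₁ hlt hl₁; omega
      · omega
      · have := hc₁ k₀ hlt hl₀; omega
    · have := hag k₀ hl₀; omega
  · rintro (⟨k₁, hl₁, ha₁, hb₁, hc₁⟩ | ⟨-, k₁, hl₁, ha₁, hb₁, hc₁⟩)
    · have := hag k₁ hl₁; omega
    · rcases lt_trichotomy k₀ k₁ with hlt | rfl | hlt
      · have := hc₁ k₀ hlt; omega
      · omega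
      · have := hc₀ k₁ hlt; omega

theorem ltNode_snoc_snoc {b b' : Fin d → ℕ} (ℓ' e : ℕ) (h : ltNode lab ℓ b b') :
    ltNode (Fin.snoc lab ℓ') ℓ (Fin.snoc b e) (Fin.snoc b' e) := by
  rcases h with ⟨k₀, hl₀, hb₀, hb'₀, hc₀⟩ | ⟨hag, k₀, hl₀, hb₀, hb'₀, hc₀⟩
  · refine Or.inl ⟨k₀.castSucc, by simpa, by simpa, by simpa, fun k hk hl => ?_⟩
    cases k using Fin.lastCases with
    | last => simp
    | cast k => simpa using hc₀ k (by simpa using hk) (by simpa using hl)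
  · refine Or.inr ⟨fun k hl => ?_, k₀.castSucc, by simpa, by simpa, by simpa, fun k hk => ?_⟩
    · cases k using Fin.lastCases with
      | last => simp
      | cast k => simpa using hag k (by simpa using hl)
    · cases k using Fin.lastCases with
      | last => exact absurd hk (Fin.le_last _).not_gt
      | cast k => simpa using hc₀ k (by simpa using hk)

theorem ltNode_snoc_two_one (b b' : Fin d → ℕ) :
    ltNode (Fin.snoc lab ℓ) ℓ (Fin.snoc b 2) (Fin.snoc b' 1) :=
  Or.inl ⟨Fin.last d, by simp, by simp, by simp, fun k hk _ => absurd hk (Fin.le_last k).not_gt⟩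

theorem ltNode_init_of_snoc {ℓ' : ℕ} (hne : ℓ' ≠ ℓ) {a a' : Fin (d + 1) → ℕ}
    (h : ltNode (Fin.snoc lab ℓ') ℓ a a') (hinit : Fin.init a ≠ Fin.init a') :
    ltNode lab ℓ (Fin.init a) (Fin.init a') := by
  rcases h with ⟨k₀, hl₀, ha₀, ha'₀, hc₀⟩ | ⟨hag, k₀, hl₀, ha₀, ha'₀, hc₀⟩
  · cases k₀ using Fin.lastCases with
    | last => exact absurd (by simpa using hl₀) hne
    | cast k₀ =>
      refine Or.inl ⟨k₀, by simpa using hl₀, ha₀, ha'₀, fun k hk hl => ?_⟩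
      exact hc₀ k.castSucc (by simpa using hk) (by simpa using hl)
  · cases k₀ using Fin.lastCases with
    | last => exact absurd (funext fun k => hc₀ k.castSucc (Fin.castSucc_lt_last k)) hinit
    | cast k₀ =>
      refine Or.inr ⟨fun k hl => hag k.castSucc (by simpa using hl), k₀, by simpa using hl₀,
        ha₀, ha'₀, fun k hk => hc₀ k.castSucc (by simpa using hk)⟩

end LtNode

section ACount

variable {d : ℕ} {lab : Fin d → ℕ} {ℓ : ℕ}

theorem aCount_eq_zero (h : ∀ k, lab k ≠ ℓ) (x : Fin d → ℕ) : aCount lab ℓ x = 0 := by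
  simp only [aCount, Finset.card_eq_zero, Finset.filter_eq_empty_iff]
  exact fun k _ hk => h k hk.1

theorem aCount_snoc (ℓ' : ℕ) (b : Fin d → ℕ) (e : ℕ) :
    aCount (Fin.snoc lab ℓ') ℓ (Fin.snoc b e) =
      aCount lab ℓ b + if ℓ' = ℓ ∧ e = 2 then 1 else 0 := by
  simp only [aCount, Finset.card_filter, Fin.sum_univ_castSucc, Fin.snoc_castSucc, Fin.snoc_last]

theorem aCount_snoc_of_ne {ℓ' : ℕ} (hne : ℓ' ≠ ℓ) (x : Fin (d + 1) → ℕ) :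
    aCount (Fin.snoc lab ℓ') ℓ x = aCount lab ℓ (Fin.init x) := by
  simpa [hne] using aCount_snoc (lab := lab) (ℓ := ℓ) ℓ' (Fin.init x) (x (Fin.last d))

end ACount

section StepSet

variable {d : ℕ} {lab : Fin d → ℕ} {ℓ : ℕ}

/-- The tuples `v_1·1, …, v_h·1, v_h·2, …, v_{d+1}·2` of the next level, with `k` 0-based. -/
def stepSet (v : Fin (d + 1) → Fin d → ℕ) (h : ℕ) : Set (Fin (d + 1) → ℕ) :=
  {z | ∃ k : Fin (d + 1),
    ((k : ℕ) < h ∧ z = Fin.snoc (v k) 1) ∨ (h ≤ (k : ℕ) + 1 ∧ z = Fin.snoc (v k) 2)}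

theorem range_eq_stepSet {h : ℕ} (hh2 : h ≤ d + 1) (v : Fin (d + 1) → Fin d → ℕ) :
    Set.range (fun j : Fin (d + 2) =>
      if hj : (j : ℕ) < h then (Fin.snoc (v ⟨(j : ℕ), by omega⟩) 1 : Fin (d + 1) → ℕ)
      else Fin.snoc (v ⟨(j : ℕ) - 1, by omega⟩) 2) = stepSet v h := by
  ext z
  constructor
  · rintro ⟨j, rfl⟩
    by_cases hj : (j : ℕ) < h
    · exact ⟨⟨j, by omega⟩, Or.inl ⟨hj, by simp [hj]⟩⟩
    · exact ⟨⟨j - 1, by omega⟩, Or.inr ⟨by simp; omega, by simp [hj]⟩⟩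
  · rintro ⟨k, ⟨hk, rfl⟩ | ⟨hk, rfl⟩⟩
    · exact ⟨k.castSucc, by simp [hk]⟩
    · refine ⟨k.succ, ?_⟩
      simp [show ¬ (k : ℕ) + 1 < h by omega]

theorem image_init_stepSet (v : Fin (d + 1) → Fin d → ℕ) (h : ℕ) :
    Fin.init '' stepSet v h = Set.range v := by
  ext z
  constructor
  · rintro ⟨_, ⟨k, ⟨-, rfl⟩ | ⟨-, rfl⟩⟩, rfl⟩ <;> exact ⟨k, by simp⟩
  · rintro ⟨k, rfl⟩
    by_cases hk : (k : ℕ) < h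
    · exact ⟨_, ⟨k, Or.inl ⟨hk, rfl⟩⟩, Fin.init_snoc _ _⟩
    · exact ⟨_, ⟨k, Or.inr ⟨by omega, rfl⟩⟩, Fin.init_snoc _ _⟩

variable {v : Fin (d + 1) → Fin d → ℕ} {h : ℕ}

theorem isLeastBy_stepSet (hv : ∀ i j, i < j → ltNode lab ℓ (v i) (v j))
    (hh1 : 1 ≤ h) (hh2 : h ≤ d + 1) :
    IsLeastBy (ltNode (Fin.snoc lab ℓ) ℓ) (stepSet v h) (Fin.snoc (v ⟨h - 1, by omega⟩) 2) := by
  refine ⟨⟨_, Or.inr ⟨by simp; omega, rfl⟩⟩, ?_⟩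
  rintro _ ⟨k, ⟨-, rfl⟩ | ⟨hk, rfl⟩⟩ hne
  · exact ltNode_snoc_two_one _ _
  · refine ltNode_snoc_snoc ℓ 2 (hv _ _ ?_)
    have hk' : (k : ℕ) ≠ h - 1 := fun e =>
      hne (by rw [show k = ⟨h - 1, by omega⟩ from Fin.ext e])
    exact Fin.lt_def.mpr (by dsimp only; omega)

theorem isLeastBy_flip_stepSet (hv : ∀ i j, i < j → ltNode lab ℓ (v i) (v j))
    (hh1 : 1 ≤ h) (hh2 : h ≤ d + 1) :
    IsLeastBy (flip (ltNode (Fin.snoc lab ℓ) ℓ)) (stepSet v h)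
      (Fin.snoc (v ⟨h - 1, by omega⟩) 1) := by
  refine ⟨⟨_, Or.inl ⟨by simp; omega, rfl⟩⟩, ?_⟩
  rintro _ ⟨k, ⟨hk, rfl⟩ | ⟨-, rfl⟩⟩ hne
  · refine ltNode_snoc_snoc ℓ 1 (hv _ _ ?_)
    have hk' : (k : ℕ) ≠ h - 1 := fun e =>
      hne (by rw [show k = ⟨h - 1, by omega⟩ from Fin.ext e])
    exact Fin.lt_def.mpr (by dsimp only; omega)
  · exact ltNode_snoc_two_one _ _

end StepSet

theorem aCount_eq_succ_of_stepSet {d : ℕ} {lab : Fin d → ℕ} {ℓ : ℕ} {v : Fin (d + 1) → Fin d → ℕ}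
    {h : ℕ} (hv : ∀ i j, i < j → ltNode lab ℓ (v i) (v j)) (hh1 : 1 ≤ h) (hh2 : h ≤ d + 1)
    {x y : Fin (d + 1) → ℕ} (hx : IsLeastBy (ltNode (Fin.snoc lab ℓ) ℓ) (stepSet v h) x)
    (hy : IsLeastBy (flip (ltNode (Fin.snoc lab ℓ) ℓ)) (stepSet v h) y) :
    aCount (Fin.snoc lab ℓ) ℓ x = aCount (Fin.snoc lab ℓ) ℓ y + 1 := by
  rw [hx.unique (fun _ _ => ltNode_asymm) (isLeastBy_stepSet hv hh1 hh2),
    hy.unique (fun _ _ h h' => ltNode_asymm h' h) (isLeastBy_flip_stepSet hv hh1 hh2)]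
  simp [aCount_snoc]

theorem Constructible.aCount_eq_succ {q d : ℕ} {lab : Fin d → ℕ} {u : Fin (d + 1) → Fin d → ℕ}
    (hR : Constructible q d lab u) {ℓ : ℕ} (hℓ : ∃ i, lab i = ℓ) {x y : Fin d → ℕ}
    (hx : IsLeastBy (ltNode lab ℓ) (Set.range u) x)
    (hy : IsLeastBy (flip (ltNode lab ℓ)) (Set.range u) y) :
    aCount lab ℓ x = aCount lab ℓ y + 1 := by
  induction hR generalizing ℓ with
  | base ℓ₁ =>
    obtain ⟨-, rfl : ℓ₁ = ℓ⟩ := hℓ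
    -- the base datum is the step with `h = 1` from the empty datum of level 0
    have hlab : (fun _ => ℓ₁ : Fin 1 → ℕ) = Fin.snoc Fin.elim0 ℓ₁ := by
      funext i; fin_cases i; rfl
    have hrange : Set.range ![![1], ![2]] = stepSet (fun _ => Fin.elim0) 1 := by
      rw [← range_eq_stepSet le_rfl]
      congr; funext j; fin_cases j <;> funext i <;> fin_cases i <;> rfl
    rw [hrange] at hx hy
    rw [hlab] at hx hy ⊢
    exact aCount_eq_succ_of_stepSet (fun i j hij => absurd (Fin.lt_def.mp hij) (by omega))
      le_rfl le_rfl hx hy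
  | @step d₀ lab₀ u₀ _ ℓ' _ _ v σ hv hsort h hh1 hh2 ih =>
    rw [range_eq_stepSet hh2] at hx hy
    by_cases hℓ' : ℓ' = ℓ
    · subst hℓ'
      exact aCount_eq_succ_of_stepSet hsort hh1 hh2 hx hy
    have hℓ₀ : ∃ i, lab₀ i = ℓ := by
      obtain ⟨i, hi⟩ := hℓ
      cases i using Fin.lastCases with
      | last => exact absurd (by simpa using hi) hℓ'
      | cast i => exact ⟨i, by simpa using hi⟩
    have hrange : Fin.init '' stepSet v h = Set.range u₀ := by
      rw [image_init_stepSet, range_eq_of_perm hv]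
    rw [aCount_snoc_of_ne hℓ', aCount_snoc_of_ne hℓ']
    exact ih hℓ₀ (hrange ▸ hx.image fun _ _ => ltNode_init_of_snoc hℓ')
      (hrange ▸ hy.image fun _ _ hab hne => ltNode_init_of_snoc hℓ' hab hne.symm)

theorem constructible_aCount_first_last_general {q d : ℕ}
    {lab : Fin d → ℕ} {u : Fin (d + 1) → Fin d → ℕ}
    (hR : Constructible q d lab u) (ℓ : ℕ)
    (v : Fin (d + 1) → Fin d → ℕ) (σ : Equiv.Perm (Fin (d + 1)))
    (hv : ∀ j, v j = u (σ j))
    (hsort : ∀ i j : Fin (d + 1), i < j → ltNode lab ℓ (v i) (v j)) :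
    (aCount lab ℓ (v 0) : ℤ) - (aCount lab ℓ (v (Fin.last d)) : ℤ) ≤ 1 ∧
    ((aCount lab ℓ (v 0) : ℤ) - (aCount lab ℓ (v (Fin.last d)) : ℤ) = 1 ↔
      ∃ i : Fin d, lab i = ℓ) := by
  by_cases hℓ : ∃ i, lab i = ℓ
  · have hrange : Set.range v = Set.range u := range_eq_of_perm hv
    have hcount := hR.aCount_eq_succ hℓ (hrange ▸ isLeastBy_range_zero hsort)
      (hrange ▸ isLeastBy_flip_range_last hsort)
    simp only [hcount, hℓ, iff_true]
    omega
  · simp only [not_exists] at hℓ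
    simp [aCount_eq_zero hℓ, hℓ]

/-- If `(v_1,…,v_{d+1})` is the reordering of the tuples of a constructible special point
data that is increasing for `<_ℓ`, then `a^ℓ_{v_1}(R) − a^ℓ_{v_{d+1}}(R) ≤ 1`, with
equality if and only if some node label `ℓ_i` equals `ℓ`. -/
theorem constructible_aCount_first_last {q d : ℕ} (hq : 1 ≤ q) (hd : 1 ≤ d)
    {lab : Fin d → ℕ} {u : Fin (d + 1) → Fin d → ℕ}
    (hR : Constructible q d lab u) (ℓ : ℕ) (hℓ1 : 1 ≤ ℓ) (hℓq : ℓ ≤ q)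
    (v : Fin (d + 1) → Fin d → ℕ) (σ : Equiv.Perm (Fin (d + 1)))
    (hv : ∀ j, v j = u (σ j))
    (hsort : ∀ i j : Fin (d + 1), i < j → ltNode lab ℓ (v i) (v j)) :
    (aCount lab ℓ (v 0) : ℤ) - (aCount lab ℓ (v (Fin.last d)) : ℤ) ≤ 1 ∧
    ((aCount lab ℓ (v 0) : ℤ) - (aCount lab ℓ (v (Fin.last d)) : ℤ) = 1 ↔
      ∃ i : Fin d, lab i = ℓ) :=
  constructible_aCount_first_last_general hR ℓ v σ hv hsort
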